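/- arXiv:1804.00802 — 4 statements merged into one kernel-verified Lean document; each statement's English description precedes it below -/
import Mathlib

section
/- If $0 < k \le 1$ and $r \ge 2$ is a real number, then $\frac{3}{r^k} - \frac{3}{(r-1)^k + 3} \ge \frac{1}{r^{2k}}$. -/
/-!
With `a = r ^ k` and `b = (r - 1) ^ k`, subadditivity of `t ↦ t ^ k` gives `a ≤ b + 1`, so
`3 / a - 3 / (b + 3) ≥ 3 / a - 3 / (a + 2) = 6 / (a (a + 2))`, which is at least `1 / a ^ 2`
as soon as `5 a ≥ 2`; and `a ≥ 1`.
-/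

lemma one_div_sq_le_three_div_sub_three_div {a b : ℝ} (ha : 2 / 5 ≤ a) (hab : a ≤ b + 1) :
    1 / a ^ 2 ≤ 3 / a - 3 / (b + 3) := by
  have ha0 : 0 < a := by linarith
  calc 1 / a ^ 2 ≤ 3 / a - 3 / (a + 2) := by
        rw [div_sub_div _ _ ha0.ne' (by positivity), div_le_div_iff₀ (by positivity) (by positivity)]
        nlinarith [mul_pos ha0 ha0]
    _ ≤ 3 / a - 3 / (b + 3) := by gcongr 3 / a - 3 / ?_; linarith

lemma Real.rpow_le_rpow_sub_one_add_one {r k : ℝ} (hr : 1 ≤ r) (hk0 : 0 ≤ k) (hk1 : k ≤ 1) :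
    r ^ k ≤ (r - 1) ^ k + 1 := by
  simpa using Real.rpow_add_le_add_rpow (sub_nonneg.2 hr) zero_le_one hk0 hk1

theorem rpow_ineq_one (k r : ℝ) (hk0 : 0 < k) (hk1 : k ≤ 1) (hr : 2 ≤ r) :
    3 / r ^ k - 3 / ((r - 1) ^ k + 3) ≥ 1 / r ^ (2 * k) := by
  have hr1 : 1 ≤ r := by linarith
  have hsq : r ^ (2 * k) = (r ^ k) ^ 2 := by
    rw [mul_comm, Real.rpow_mul (by linarith), Real.rpow_two]
  have hone : 1 ≤ r ^ k := Real.one_le_rpow hr1 hk0.le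
  rw [hsq, ge_iff_le]
  exact one_div_sq_le_three_div_sub_three_div (by linarith)
    (Real.rpow_le_rpow_sub_one_add_one hr1 hk0.le hk1)
end

section
/- Define a sequence $(\Sigma_r)_{r \ge 1}$ of reals by $\Sigma_1 \le 3$ (with $\Sigma_1 > 0$) and $\Sigma_{r+1} = \frac{1}{(r+1)^k} + \frac{\Sigma_r}{\Sigma_r + 1}$ for a fixed $0 < k \le 2$. Then $\Sigma_r \le \frac{3}{r^{k/2}}$ for all $r \ge 1$. -/
/-!
Induction on `r`, carrying `0 ≤ V r` along. With `a = r^(k/2)` and `b = (r+1)^(k/2)`, the map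
`x ↦ x / (x + 1)` is monotone, so the induction hypothesis gives `V r / (V r + 1) ≤ 3 / (a + 3)`,
and `(r+1)^k = b²`. Since `k/2 ≤ 1`, the power `t ↦ t^(k/2)` is subadditive, so `b ≤ a + 1`, and
then `1/b² + 3/(a + 3) ≤ 1/b² + 3/(b + 2) ≤ 3/b` reduces to `2 ≤ 5b`, which holds as `b ≥ 1`.
-/

lemma div_self_add_one_le_of_le_div {x a c : ℝ} (hx : 0 ≤ x) (ha : 0 < a) (hc : 0 ≤ c)
    (hxa : x ≤ c / a) : x / (x + 1) ≤ c / (a + c) := by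
  have hxa' : x * a ≤ c := (le_div_iff₀ ha).mp hxa
  rw [div_le_div_iff₀ (by linarith) (by linarith)]
  nlinarith

lemma one_div_sq_add_three_div_le {a b : ℝ} (hb : 1 ≤ b) (hba : b ≤ a + 1) :
    1 / b ^ 2 + 3 / (a + 3) ≤ 3 / b := by
  have hmono : 3 / (a + 3) ≤ 3 / (b + 2) :=
    div_le_div_of_nonneg_left (by norm_num) (by linarith) (by linarith)
  have hb2 : 1 / b ^ 2 + 3 / (b + 2) ≤ 3 / b := by
    rw [div_add_div _ _ (by positivity) (by linarith), div_le_div_iff₀ (by positivity) (by linarith)]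
    nlinarith
  linarith

lemma one_div_rpow_add_div_self_add_one_le {k n x : ℝ} (hk0 : 0 ≤ k) (hk2 : k ≤ 2) (hn : 0 < n)
    (hx : 0 ≤ x) (hxn : x ≤ 3 / n ^ (k / 2)) :
    1 / (n + 1) ^ k + x / (x + 1) ≤ 3 / (n + 1) ^ (k / 2) := by
  have hsq : (n + 1) ^ k = ((n + 1) ^ (k / 2)) ^ 2 := by
    rw [← Real.rpow_two, ← Real.rpow_mul (by linarith), div_mul_cancel₀ k two_ne_zero]
  have hb : 1 ≤ (n + 1) ^ (k / 2) := Real.one_le_rpow (by linarith) (by positivity)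
  have hba : (n + 1) ^ (k / 2) ≤ n ^ (k / 2) + 1 := by
    simpa using Real.rpow_add_le_add_rpow hn.le zero_le_one (by positivity) (by linarith)
  have hfrac : x / (x + 1) ≤ 3 / (n ^ (k / 2) + 3) :=
    div_self_add_one_le_of_le_div hx (by positivity) (by norm_num) hxn
  rw [hsq]
  linarith [one_div_sq_add_three_div_le hb hba]

theorem variance_recursion_bound (k : ℝ) (hk0 : 0 < k) (hk2 : k ≤ 2)
    (V : ℕ → ℝ) (h1 : V 1 ≤ 3) (h1pos : 0 < V 1)
    (hrec : ∀ r : ℕ, 1 ≤ r → V (r + 1) = 1 / ((r : ℝ) + 1) ^ k + V r / (V r + 1)) :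
    ∀ r : ℕ, 1 ≤ r → V r ≤ 3 / (r : ℝ) ^ (k / 2) := by
  suffices h : ∀ r : ℕ, 1 ≤ r → 0 ≤ V r ∧ V r ≤ 3 / (r : ℝ) ^ (k / 2) from
    fun r hr => (h r hr).2
  intro r hr
  induction r, hr using Nat.le_induction with
  | base => simpa using ⟨h1pos.le, h1⟩
  | succ n hn ih =>
    obtain ⟨hV0, hV⟩ := ih
    have hn' : (0 : ℝ) < n := by exact_mod_cast hn
    rw [hrec n hn]
    push_cast
    exact ⟨by positivity,
      one_div_rpow_add_div_self_add_one_le hk0.le hk2 hn' hV0 hV⟩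
end

section
/- Let $(\Sigma_r)$ satisfy $\Sigma_1 \le 3$, $\Sigma_r > 0$, and $\Sigma_{r+1} = \frac{1}{(r+1)^k} + \frac{\Sigma_r}{\Sigma_r+1}$ with $0 < k < 2$. Then $\sum_{r=1}^R \Sigma_r \le \frac{6}{2-k} R^{1 - k/2}$ for every positive integer $R$. -/
/-!
Writing `s = r ^ (k/2)` and `t = (r+1) ^ (k/2)`, one has `1 ≤ s ≤ t ≤ s + 1` by subadditivity of
`x ↦ x ^ (k/2)`, and these are exactly what makes `Σ_r ≤ 3 / s` propagate through the recursion,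
since `v ↦ v / (v + 1)` is monotone. Summing, `∑ r ^ (-k/2)` is compared with `R ^ (1 - k/2)` through
the tangent line of the concave function `x ↦ x ^ (1 - k/2)` at `R + 1`.
-/

open Real Finset

lemma rpow_le_rpow_add_one_sub_mul {x p : ℝ} (hx : 0 ≤ x) (hp0 : 0 ≤ p) (hp1 : p ≤ 1) :
    x ^ p ≤ (x + 1) ^ p - p * (x + 1) ^ (p - 1) := by
  have hx1 : 0 < x + 1 := by linarith
  have hratio : x / (x + 1) = 1 + -(x + 1)⁻¹ := by field_simp; ring
  have hinv : (x + 1)⁻¹ ≤ 1 := inv_le_one_of_one_le₀ (by linarith)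
  calc x ^ p = (x + 1) ^ p * (x / (x + 1)) ^ p := by
        rw [← mul_rpow hx1.le (by positivity), mul_div_cancel₀ _ hx1.ne']
    _ ≤ (x + 1) ^ p * (1 + p * -(x + 1)⁻¹) := by
        rw [hratio]
        gcongr
        exact rpow_one_add_le_one_add_mul_self (by linarith) hp0 hp1
    _ = (x + 1) ^ p - p * (x + 1) ^ (p - 1) := by rw [rpow_sub_one hx1.ne']; ring

lemma sum_Icc_rpow_neg_le {a : ℝ} (ha0 : 0 ≤ a) (ha1 : a < 1) (R : ℕ) :
    ∑ r ∈ Icc 1 R, (r : ℝ) ^ (-a) ≤ (R : ℝ) ^ (1 - a) / (1 - a) := by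
  induction R with
  | zero => simp [zero_rpow (by linarith : 1 - a ≠ 0)]
  | succ R ih =>
    have htangent := rpow_le_rpow_add_one_sub_mul (R.cast_nonneg (α := ℝ))
      (by linarith : 0 ≤ 1 - a) (by linarith)
    rw [sub_sub_cancel_left] at htangent
    rw [sum_Icc_succ_top (by omega), Nat.cast_succ, le_div_iff₀ (by linarith)]
    rw [le_div_iff₀ (by linarith)] at ih
    linear_combination ih + htangent

lemma div_add_one_le_three_div_add {v s : ℝ} (hv : 0 ≤ v) (hs : 0 < s) (hvs : v ≤ 3 * s⁻¹) :
    v / (v + 1) ≤ 3 / (3 + s) := by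
  rw [div_le_div_iff₀ (by linarith) (by linarith)]
  have hvs_mul : v * s ≤ 3 := by rwa [le_mul_inv_iff₀ hs] at hvs
  nlinarith

lemma inv_sq_add_div_add_one_le {v s t : ℝ} (hv : 0 ≤ v) (hvs : v ≤ 3 * s⁻¹)
    (hs : 1 ≤ s) (hst : s ≤ t) (hts : t ≤ s + 1) :
    1 / t ^ 2 + v / (v + 1) ≤ 3 * t⁻¹ := by
  have ht : 0 < t := by linarith
  calc 1 / t ^ 2 + v / (v + 1) ≤ 1 / t ^ 2 + 3 / (3 + s) := by
        grw [div_add_one_le_three_div_add hv (by linarith) hvs]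
    _ ≤ 3 * t⁻¹ := by
        rw [div_add_div _ _ (by positivity) (by positivity), ← div_eq_mul_inv,
          div_le_div_iff₀ (by positivity) ht]
        nlinarith [mul_nonneg (sub_nonneg.2 hst) ht.le]

lemma le_three_mul_rpow_neg_of_recursion {k : ℝ} (hk0 : 0 ≤ k) (hk2 : k ≤ 2) {V : ℕ → ℝ}
    (h1 : V 1 ≤ 3) (hnonneg : ∀ r : ℕ, 1 ≤ r → 0 ≤ V r)
    (hrec : ∀ r : ℕ, 1 ≤ r → V (r + 1) = 1 / ((r : ℝ) + 1) ^ k + V r / (V r + 1))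
    {r : ℕ} (hr : 1 ≤ r) : V r ≤ 3 * (r : ℝ) ^ (-(k / 2)) := by
  induction r, hr using Nat.le_induction with
  | base => simpa using h1
  | succ r hr ih =>
    have hr' : (1 : ℝ) ≤ r := by exact_mod_cast hr
    have hsq : ((r : ℝ) + 1) ^ k = (((r : ℝ) + 1) ^ (k / 2)) ^ 2 := by
      rw [← rpow_mul_natCast (by positivity)]; ring_nf
    rw [hrec r hr, hsq, Nat.cast_succ, rpow_neg (by positivity)]
    rw [rpow_neg (by positivity)] at ih
    refine inv_sq_add_div_add_one_le (hnonneg r hr) ih (one_le_rpow hr' (by positivity))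
      (by gcongr; linarith) ?_
    calc ((r : ℝ) + 1) ^ (k / 2) ≤ (r : ℝ) ^ (k / 2) + 1 ^ (k / 2) :=
          rpow_add_le_add_rpow (by positivity) zero_le_one (by positivity) (by linarith)
      _ = (r : ℝ) ^ (k / 2) + 1 := by rw [one_rpow]

theorem variance_sum_bound_general (k : ℝ) (hk0 : 0 < k) (hk2 : k < 2)
    (V : ℕ → ℝ) (h1 : V 1 ≤ 3) (hpos : ∀ r : ℕ, 1 ≤ r → 0 < V r)
    (hrec : ∀ r : ℕ, 1 ≤ r → V (r + 1) = 1 / ((r : ℝ) + 1) ^ k + V r / (V r + 1))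
    (R : ℕ) :
    ∑ r ∈ Finset.Icc 1 R, V r ≤ (6 / (2 - k)) * (R : ℝ) ^ (1 - k / 2) := by
  have hpointwise : ∀ r ∈ Icc 1 R, V r ≤ 3 * (r : ℝ) ^ (-(k / 2)) := fun r hr =>
    le_three_mul_rpow_neg_of_recursion hk0.le hk2.le h1 (fun r hr => (hpos r hr).le) hrec
      (mem_Icc.1 hr).1
  calc ∑ r ∈ Icc 1 R, V r ≤ ∑ r ∈ Icc 1 R, 3 * (r : ℝ) ^ (-(k / 2)) := sum_le_sum hpointwise
    _ = 3 * ∑ r ∈ Icc 1 R, (r : ℝ) ^ (-(k / 2)) := (mul_sum _ _ _).symm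
    _ ≤ 3 * ((R : ℝ) ^ (1 - k / 2) / (1 - k / 2)) := by
        gcongr; exact sum_Icc_rpow_neg_le (by linarith) (by linarith) R
    _ = 6 / (2 - k) * (R : ℝ) ^ (1 - k / 2) := by
        field_simp [show (2 - k) ≠ 0 by linarith]; ring

theorem variance_sum_bound (k : ℝ) (hk0 : 0 < k) (hk2 : k < 2)
    (V : ℕ → ℝ) (h1 : V 1 ≤ 3) (hpos : ∀ r : ℕ, 1 ≤ r → 0 < V r)
    (hrec : ∀ r : ℕ, 1 ≤ r → V (r + 1) = 1 / ((r : ℝ) + 1) ^ k + V r / (V r + 1))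
    (R : ℕ) (hR : 0 < R) :
    ∑ r ∈ Finset.Icc 1 R, V r ≤ (6 / (2 - k)) * (R : ℝ) ^ (1 - k / 2) :=
  variance_sum_bound_general k hk0 hk2 V h1 hpos hrec R
end

section
/- Let $(\Sigma_r)$ satisfy $\Sigma_1 \le 3$, $\Sigma_r > 0$, and $\Sigma_{r+1} = \frac{1}{(r+1)^k} + \frac{\Sigma_r}{\Sigma_r+1}$ with $k \ge 2$. Then $\Sigma_r \le \frac{3}{r}$ for all $r \ge 1$, and hence $\sum_{r=1}^R \Sigma_r \le 3 \ln R + 3$. -/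
/-!
The map `v ↦ v / (v + 1)` is increasing, so `V r ≤ 3 / r` gives `V r / (V r + 1) ≤ 3 / (r + 3)`.
The gap `3 / (r + 1) - 3 / (r + 3) = 6 / ((r + 1) (r + 3))` dominates the forcing term
`(r + 1)⁻ᵏ ≤ (r + 1)⁻²`, which closes the induction `V r ≤ 3 / r`; summing against the
harmonic bound `H_R ≤ 1 + log R` gives the second claim.
-/

open Finset

lemma one_div_rpow_le_one_div_sq {x k : ℝ} (hx : 1 ≤ x) (hk : 2 ≤ k) :
    1 / x ^ k ≤ 1 / x ^ 2 := by
  have hsq : x ^ (2 : ℝ) ≤ x ^ k := Real.rpow_le_rpow_of_exponent_le hx hk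
  rw [Real.rpow_two] at hsq
  exact one_div_le_one_div_of_le (by positivity) hsq

lemma div_add_one_le_of_le_div {v c n : ℝ} (hv : 0 ≤ v) (hc : 0 ≤ c) (hn : 0 < n)
    (hvc : v ≤ c / n) : v / (v + 1) ≤ c / (n + c) := by
  rw [div_le_div_iff₀ (by linarith) (by linarith)]
  have : v * n ≤ c := (le_div_iff₀ hn).mp hvc
  nlinarith

lemma one_div_sq_add_three_div_le_s9 {x : ℝ} (hx : 0 ≤ x) :
    1 / (x + 1) ^ 2 + 3 / (x + 3) ≤ 3 / (x + 1) := by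
  rw [div_add_div _ _ (by positivity) (by positivity),
    div_le_div_iff₀ (by positivity) (by positivity)]
  nlinarith [mul_nonneg hx (sq_nonneg (x + 1))]

lemma le_three_div_of_variance_recursion {k : ℝ} (hk : 2 ≤ k) {V : ℕ → ℝ} (h1 : V 1 ≤ 3)
    (hpos : ∀ r : ℕ, 1 ≤ r → 0 < V r)
    (hrec : ∀ r : ℕ, 1 ≤ r → V (r + 1) = 1 / ((r : ℝ) + 1) ^ k + V r / (V r + 1))
    {r : ℕ} (hr : 1 ≤ r) : V r ≤ 3 / r := by
  induction r, hr using Nat.le_induction with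
  | base => simpa using h1
  | succ n hn ih =>
    have hn' : (0 : ℝ) < n := by exact_mod_cast hn
    have hforcing : 1 / ((n : ℝ) + 1) ^ k ≤ 1 / ((n : ℝ) + 1) ^ 2 :=
      one_div_rpow_le_one_div_sq (by linarith) hk
    have hcontraction : V n / (V n + 1) ≤ 3 / ((n : ℝ) + 3) :=
      div_add_one_le_of_le_div (hpos n hn).le (by norm_num) hn' ih
    rw [hrec n hn]
    push_cast
    linarith [one_div_sq_add_three_div_le_s9 hn'.le]

lemma sum_Icc_le_mul_log_add_one {V : ℕ → ℝ} {c : ℝ} (hc : 0 ≤ c) (R : ℕ)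
    (hV : ∀ r ∈ Icc 1 R, V r ≤ c / r) :
    ∑ r ∈ Icc 1 R, V r ≤ c * Real.log R + c := by
  have hharmonic : ∑ r ∈ Icc 1 R, ((r : ℝ))⁻¹ ≤ 1 + Real.log R := by
    have := harmonic_le_one_add_log R
    rw [harmonic_eq_sum_Icc] at this
    push_cast at this
    exact this
  calc ∑ r ∈ Icc 1 R, V r ≤ ∑ r ∈ Icc 1 R, c * ((r : ℝ))⁻¹ :=
        sum_le_sum fun r hr => (hV r hr).trans_eq (div_eq_mul_inv c r)
    _ = c * ∑ r ∈ Icc 1 R, ((r : ℝ))⁻¹ := (mul_sum _ _ _).symm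
    _ ≤ c * (1 + Real.log R) := mul_le_mul_of_nonneg_left hharmonic hc
    _ = c * Real.log R + c := by ring

theorem variance_sum_bound_large_k (k : ℝ) (hk : 2 ≤ k)
    (V : ℕ → ℝ) (h1 : V 1 ≤ 3) (hpos : ∀ r : ℕ, 1 ≤ r → 0 < V r)
    (hrec : ∀ r : ℕ, 1 ≤ r → V (r + 1) = 1 / ((r : ℝ) + 1) ^ k + V r / (V r + 1)) :
    (∀ r : ℕ, 1 ≤ r → V r ≤ 3 / (r : ℝ)) ∧
      ∀ R : ℕ, 0 < R → ∑ r ∈ Finset.Icc 1 R, V r ≤ 3 * Real.log R + 3 := by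
  have hbound : ∀ r : ℕ, 1 ≤ r → V r ≤ 3 / (r : ℝ) := fun r hr =>
    le_three_div_of_variance_recursion hk h1 hpos hrec hr
  exact ⟨hbound, fun R _ => sum_Icc_le_mul_log_add_one (by norm_num) R fun r hr => hbound r (mem_Icc.mp hr).1⟩
end
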